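/- arXiv:math/0401244 — 5 statements merged into one kernel-verified Lean document; each statement's English description precedes it below -/
import Mathlib

section
/- Say that w ∈ ℤ⁹ is obtained from v ∈ ℤ⁹ by a geometric Cremona curve move over a 4-element subset B ⊆ {1,…,8} if either (i) v = C_0^{i,j} with {i,j} ⊆ B and w = C_0^{k,l}, where {i,j,k,l} = B, or (ii) v is not of the form C_0^{i,j} with {i,j} ⊆ B and w = Cr_B(v). Then a vector v ∈ ℤ⁹ can be obtained from C_0^{1,2} = (1; 1, 1, 0, 0, 0, 0, 0, 0) by a finite sequence of geometric Cremona curve moves (over arbitrary 4-element subsets B) if and only if v = C_a^{b,c} for some integer a ≥ 0 and distinct b, c ∈ {1,…,8}. -/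
/-- The Cremona curve move over a subset `B ⊆ {1,…,8}` (indexed by `Fin 8`),
acting on a curve vector `(δ; μ_1,…,μ_8) ∈ ℤ⁹ = ℤ × (Fin 8 → ℤ)`. -/
def CrC (B : Finset (Fin 8)) (v : ℤ × (Fin 8 → ℤ)) : ℤ × (Fin 8 → ℤ) :=
  (v.1 + 2 * (v.1 - ∑ i ∈ B, v.2 i),
    fun i => if i ∈ B then v.2 i + (v.1 - ∑ i ∈ B, v.2 i) else v.2 i)

/-- The `(−1)`-curve vector `C_a^{b,c}`. -/
def Cv (a : ℕ) (b c : Fin 8) : ℤ × (Fin 8 → ℤ) :=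
  (2 * (a : ℤ) + 1, fun i =>
    if a % 2 = 0 then ((a / 2 : ℕ) : ℤ) + (if i = b ∨ i = c then 1 else 0)
    else (((a + 1) / 2 : ℕ) : ℤ) - (if i = b ∨ i = c then 1 else 0))

/-- `v` is of the form `C_0^{i,j}` with `{i,j} ⊆ B`. -/
def IsLine (B : Finset (Fin 8)) (v : ℤ × (Fin 8 → ℤ)) : Prop :=
  ∃ i j : Fin 8, i ≠ j ∧ i ∈ B ∧ j ∈ B ∧ v = Cv 0 i j

/-- `w` is obtained from `v` by a geometric Cremona curve move over `B`:
either `v = C_0^{i,j}` with `{i,j} ⊆ B` and `w = C_0^{k,l}` where `{i,j,k,l} = B`,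
or `v` is not of that form and `w = Cr_B(v)`. -/
def GeomMove (B : Finset (Fin 8)) (v w : ℤ × (Fin 8 → ℤ)) : Prop :=
  (∃ i j k l : Fin 8, i ≠ j ∧ k ≠ l ∧ ({i, j, k, l} : Finset (Fin 8)) = B ∧
      v = Cv 0 i j ∧ w = Cv 0 k l) ∨
  (¬ IsLine B v ∧ w = CrC B v)

/-- One geometric Cremona curve move over an arbitrary 4-element subset. -/
def Step (v w : ℤ × (Fin 8 → ℤ)) : Prop :=
  ∃ B : Finset (Fin 8), B.card = 4 ∧ GeomMove B v w

lemma Cv_even (m : ℕ) (b c : Fin 8) :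
    Cv (2*m) b c = (4*(m:ℤ)+1, fun i => (m:ℤ) + if i = b ∨ i = c then 1 else 0) := by
  unfold Cv
  have h1 : (2*m) % 2 = 0 := by omega
  have h2 : (2*m) / 2 = m := by omega
  simp only [h1, h2, if_pos]
  congr 1
  push_cast; ring

lemma Cv_odd (m : ℕ) (b c : Fin 8) :
    Cv (2*m+1) b c = (4*(m:ℤ)+3, fun i => ((m:ℤ)+1) - if i = b ∨ i = c then 1 else 0) := by
  unfold Cv
  have h1 : (2*m+1) % 2 = 1 := by omega
  have h2 : (2*m+1+1) / 2 = m+1 := by omega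
  simp only [h1, h2, if_neg (by omega : ¬ (2*m+1) % 2 = 0)]
  congr 1
  push_cast; ring

lemma sum_ind (B : Finset (Fin 8)) (b c : Fin 8) (hbc : b ≠ c) (k s : ℤ) :
    ∑ i ∈ B, (k + s * (if i = b ∨ i = c then 1 else 0))
      = B.card * k + (if b ∈ B then s else 0) + (if c ∈ B then s else 0) := by
  have : ∀ i ∈ B, k + s * (if i = b ∨ i = c then 1 else 0)
      = k + ((if i = b then s else 0) + (if i = c then s else 0)) := by
    intro i _
    by_cases hib : i = b <;> by_cases hic : i = c <;> simp_all
  rw [Finset.sum_congr rfl this]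
  rw [Finset.sum_add_distrib, Finset.sum_add_distrib, Finset.sum_const, nsmul_eq_mul,
    Finset.sum_ite_eq' B b (fun _ => s), Finset.sum_ite_eq' B c (fun _ => s)]
  ring

lemma crc_fix (B : Finset (Fin 8)) (v : ℤ × (Fin 8 → ℤ)) (h : v.1 - ∑ i ∈ B, v.2 i = 0) :
    CrC B v = v := by
  unfold CrC
  rw [h]
  simp

-- keyB : a odd, b,c ∈ B
lemma keyB (m : ℕ) (b c x y : Fin 8) (hbc : b ≠ c) (hbx : b ≠ x) (hby : b ≠ y)
    (hcx : c ≠ x) (hcy : c ≠ y) (hxy : x ≠ y) :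
    CrC {b, c, x, y} (Cv (2*m+1) b c) = Cv (2*m+1+1) x y := by
  have h2 : 2*m+1+1 = 2*(m+1) := by ring
  rw [Cv_odd, h2, Cv_even]
  have hsum : ∑ i ∈ ({b,c,x,y} : Finset (Fin 8)), (((m:ℤ)+1) - if i = b ∨ i = c then 1 else 0)
      = ∑ i ∈ ({b,c,x,y} : Finset (Fin 8)), (((m:ℤ)+1) + (-1) * (if i = b ∨ i = c then 1 else 0)) := by
    apply Finset.sum_congr rfl; intro i _; ring
  have hcard : ({b,c,x,y} : Finset (Fin 8)).card = 4 := by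
    rw [Finset.card_insert_of_notMem (by simp [hbc, hbx, hby]),
        Finset.card_insert_of_notMem (by simp [hcx, hcy]),
        Finset.card_insert_of_notMem (by simp [hxy]), Finset.card_singleton]
  unfold CrC
  rw [hsum, sum_ind _ _ _ hbc, hcard]
  simp only [Finset.mem_insert, Finset.mem_singleton, true_or, or_true, if_pos]
  norm_num
  constructor
  · push_cast; ring
  · funext i
    by_cases hib : i = b <;> by_cases hic : i = c <;> by_cases hix : i = x <;>
      by_cases hiy : i = y <;> simp_all <;> push_cast <;> ring

lemma card4 (b c x y : Fin 8) (hbc : b ≠ c) (hbx : b ≠ x) (hby : b ≠ y)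
    (hcx : c ≠ x) (hcy : c ≠ y) (hxy : x ≠ y) :
    ({b,c,x,y} : Finset (Fin 8)).card = 4 := by
  rw [Finset.card_insert_of_notMem (by simp [hbc, hbx, hby]),
      Finset.card_insert_of_notMem (by simp [hcx, hcy]),
      Finset.card_insert_of_notMem (by simp [hxy]), Finset.card_singleton]

lemma keyA (m : ℕ) (b c x y : Fin 8) (hbc : b ≠ c) (hbx : b ≠ x) (hby : b ≠ y)
    (hcx : c ≠ x) (hcy : c ≠ y) (hxy : x ≠ y) :
    CrC ({b, c, x, y} : Finset (Fin 8))ᶜ (Cv (2*m) b c) = Cv (2*m+1) x y := by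
  rw [Cv_even, Cv_odd]
  set B := ({b,c,x,y} : Finset (Fin 8))ᶜ with hB
  have hcard : B.card = 4 := by
    rw [hB, Finset.card_compl, card4 b c x y hbc hbx hby hcx hcy hxy]; rfl
  have hsum : ∑ i ∈ B, ((m:ℤ) + if i = b ∨ i = c then 1 else 0)
      = ∑ i ∈ B, ((m:ℤ) + 1 * (if i = b ∨ i = c then 1 else 0)) := by
    apply Finset.sum_congr rfl; intro i _; ring
  have hb : b ∉ B := by simp [hB]
  have hc : c ∉ B := by simp [hB]
  unfold CrC
  rw [hsum, sum_ind _ _ _ hbc, hcard, if_neg hb, if_neg hc]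
  norm_num
  constructor
  · push_cast; ring
  · funext i
    clear hsum hcard
    simp only [hB, Finset.mem_compl, Finset.mem_insert, Finset.mem_singleton]
    by_cases hib : i = b <;> by_cases hic : i = c <;> by_cases hix : i = x <;>
      by_cases hiy : i = y <;> simp_all <;> ring

lemma keyC (m : ℕ) (b c x y : Fin 8) (hbc : b ≠ c) (hbx : b ≠ x) (hby : b ≠ y)
    (hcx : c ≠ x) (hcy : c ≠ y) (hxy : x ≠ y) :
    CrC ({b, c, x, y} : Finset (Fin 8))ᶜ (Cv (2*m+1) b c) = Cv (2*m) x y := by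
  rw [Cv_odd, Cv_even]
  set B := ({b,c,x,y} : Finset (Fin 8))ᶜ with hB
  have hcard : B.card = 4 := by
    rw [hB, Finset.card_compl, card4 b c x y hbc hbx hby hcx hcy hxy]; rfl
  have hsum : ∑ i ∈ B, (((m:ℤ)+1) - if i = b ∨ i = c then 1 else 0)
      = ∑ i ∈ B, (((m:ℤ)+1) + (-1) * (if i = b ∨ i = c then 1 else 0)) := by
    apply Finset.sum_congr rfl; intro i _; ring
  have hb : b ∉ B := by simp [hB]
  have hc : c ∉ B := by simp [hB]
  unfold CrC
  rw [hsum, sum_ind _ _ _ hbc, hcard, if_neg hb, if_neg hc]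
  norm_num
  constructor
  · push_cast; ring
  · funext i
    clear hsum hcard
    simp only [hB, Finset.mem_compl, Finset.mem_insert, Finset.mem_singleton]
    by_cases hib : i = b <;> by_cases hic : i = c <;> by_cases hix : i = x <;>
      by_cases hiy : i = y <;> simp_all <;> ring

lemma keyD (m : ℕ) (b c x y : Fin 8) (hbc : b ≠ c) (hbx : b ≠ x) (hby : b ≠ y)
    (hcx : c ≠ x) (hcy : c ≠ y) (hxy : x ≠ y) :
    CrC {b, c, x, y} (Cv (2*(m+1)) b c) = Cv (2*m+1) x y := by
  rw [Cv_even, Cv_odd]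
  have hcard := card4 b c x y hbc hbx hby hcx hcy hxy
  have hsum : ∑ i ∈ ({b,c,x,y} : Finset (Fin 8)), (((m:ℤ)+1) + if i = b ∨ i = c then 1 else 0)
      = ∑ i ∈ ({b,c,x,y} : Finset (Fin 8)), (((m:ℤ)+1) + 1 * (if i = b ∨ i = c then 1 else 0)) := by
    apply Finset.sum_congr rfl; intro i _; ring
  unfold CrC
  push_cast
  rw [hsum, sum_ind _ _ _ hbc, hcard]
  simp only [Finset.mem_insert, Finset.mem_singleton, true_or, or_true, if_pos]
  norm_num
  constructor
  · push_cast; ring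
  · funext i
    by_cases hib : i = b <;> by_cases hic : i = c <;> by_cases hix : i = x <;>
      by_cases hiy : i = y <;> simp_all <;> ring

lemma keyE (a : ℕ) (B : Finset (Fin 8)) (hcard : B.card = 4) (b c : Fin 8) (hbc : b ≠ c)
    (h1 : (if b ∈ B then (1:ℤ) else 0) + (if c ∈ B then 1 else 0) = 1) :
    CrC B (Cv a b c) = Cv a b c := by
  apply crc_fix
  rcases Nat.even_or_odd a with ⟨m,hm⟩|⟨m,hm⟩
  · have ha : a = 2*m := by omega
    rw [ha, Cv_even]
    have hsum : ∑ i ∈ B, ((m:ℤ) + if i = b ∨ i = c then 1 else 0)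
        = ∑ i ∈ B, ((m:ℤ) + 1 * (if i = b ∨ i = c then 1 else 0)) := by
      apply Finset.sum_congr rfl; intro i _; ring
    simp only [hsum]
    rw [sum_ind _ _ _ hbc, hcard]
    by_cases hbB : b ∈ B <;> by_cases hcB : c ∈ B <;>
      simp [hbB, hcB] at h1 ⊢ <;> push_cast <;> linarith
  · have ha : a = 2*m+1 := by omega
    rw [ha, Cv_odd]
    have hsum : ∑ i ∈ B, (((m:ℤ)+1) - if i = b ∨ i = c then 1 else 0)
        = ∑ i ∈ B, (((m:ℤ)+1) + (-1) * (if i = b ∨ i = c then 1 else 0)) := by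
      apply Finset.sum_congr rfl; intro i _; ring
    simp only [hsum]
    rw [sum_ind _ _ _ hbc, hcard]
    by_cases hbB : b ∈ B <;> by_cases hcB : c ∈ B <;>
      simp [hbB, hcB] at h1 ⊢ <;> push_cast <;> linarith

lemma Cv_zero_pair {b c i j : Fin 8} (hbc : b ≠ c) (hij : i ≠ j)
    (h : Cv 0 b c = Cv 0 i j) : (b = i ∧ c = j) ∨ (b = j ∧ c = i) := by
  have h0 : (0:ℕ) = 2*0 := rfl
  rw [h0, Cv_even, Cv_even] at h
  have h2 := congrArg Prod.snd h
  simp only [Prod.snd] at h2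
  have hb := congrFun h2 b
  have hc := congrFun h2 c
  have hb' : b = i ∨ b = j := by
    by_contra hx; push_neg at hx; simp [hx.1, hx.2] at hb
  have hc' : c = i ∨ c = j := by
    by_contra hx; push_neg at hx; simp [hx.1, hx.2] at hc
  rcases hb' with h|h <;> rcases hc' with h'|h'
  · exact absurd (h.trans h'.symm) hbc
  · exact Or.inl ⟨h, h'⟩
  · exact Or.inr ⟨h, h'⟩
  · exact absurd (h.trans h'.symm) hbc

lemma isLine_Cv {B : Finset (Fin 8)} {a : ℕ} {b c : Fin 8} (hbc : b ≠ c)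
    (h : IsLine B (Cv a b c)) : a = 0 ∧ b ∈ B ∧ c ∈ B := by
  obtain ⟨i, j, hij, hi, hj, heq⟩ := h
  have h1 := congrArg Prod.fst heq
  simp only [Cv, Prod.fst] at h1
  have ha : a = 0 := by
    have : 2 * (a:ℤ) + 1 = 2 * ((0:ℕ):ℤ) + 1 := h1
    omega
  subst ha
  rcases Cv_zero_pair hbc hij heq with ⟨rfl, rfl⟩ | ⟨rfl, rfl⟩ <;>
    first
    | exact ⟨rfl, hi, hj⟩
    | exact ⟨rfl, hj, hi⟩

lemma extract (B : Finset (Fin 8)) (hB : B.card = 4) (b c : Fin 8) (hbc : b ≠ c)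
    (hb : b ∈ B) (hc : c ∈ B) :
    ∃ x y : Fin 8, b ≠ x ∧ b ≠ y ∧ c ≠ x ∧ c ≠ y ∧ x ≠ y ∧ B = {b, c, x, y} := by
  have hsub : ({b, c} : Finset (Fin 8)) ⊆ B := by
    intro i hi; simp only [Finset.mem_insert, Finset.mem_singleton] at hi
    rcases hi with rfl|rfl <;> assumption
  have hc2 : ({b, c} : Finset (Fin 8)).card = 2 := by
    rw [Finset.card_insert_of_notMem (by simp [hbc]), Finset.card_singleton]
  have hcard2 : (B \ {b, c}).card = 2 := by
    rw [Finset.card_sdiff_of_subset hsub, hB, hc2]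
  obtain ⟨x, y, hxy, hset⟩ := Finset.card_eq_two.mp hcard2
  have hx : x ∈ B \ {b, c} := by rw [hset]; simp
  have hy : y ∈ B \ {b, c} := by rw [hset]; simp
  simp only [Finset.mem_sdiff, Finset.mem_insert, Finset.mem_singleton] at hx hy
  push_neg at hx hy
  refine ⟨x, y, (Ne.symm hx.2.1), (Ne.symm hy.2.1), (Ne.symm hx.2.2), (Ne.symm hy.2.2), hxy, ?_⟩
  have hsub2 : ({b, c, x, y} : Finset (Fin 8)) ⊆ B := by
    intro i hi; simp only [Finset.mem_insert, Finset.mem_singleton] at hi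
    rcases hi with rfl|rfl|rfl|rfl
    · exact hb
    · exact hc
    · exact hx.1
    · exact hy.1
  have hcard4 : ({b, c, x, y} : Finset (Fin 8)).card = 4 :=
    card4 b c x y hbc (Ne.symm hx.2.1) (Ne.symm hy.2.1) (Ne.symm hx.2.2) (Ne.symm hy.2.2) hxy
  exact (Finset.eq_of_subset_of_card_le hsub2 (by omega)).symm

lemma step_preserve {a : ℕ} {b c : Fin 8} (hbc : b ≠ c) {w : ℤ × (Fin 8 → ℤ)}
    (h : Step (Cv a b c) w) : ∃ a' b' c', b' ≠ c' ∧ w = Cv a' b' c' := by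
  obtain ⟨B, hB, hmove⟩ := h
  rcases hmove with ⟨i, j, k, l, hij, hkl, hBeq, hv, hw⟩ | ⟨hnl, hw⟩
  · exact ⟨0, k, l, hkl, hw⟩
  · by_cases hb : b ∈ B <;> by_cases hc : c ∈ B
    · -- both in B
      obtain ⟨x, y, hbx, hby, hcx, hcy, hxy, hBx⟩ := extract B hB b c hbc hb hc
      rcases Nat.even_or_odd a with ⟨m, hm⟩ | ⟨m, hm⟩
      · match m, hm with
        | 0, hm =>
          exfalso
          exact hnl ⟨b, c, hbc, hb, hc, by rw [show a = 0 by omega]⟩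
        | (m'+1), hm =>
          refine ⟨2*m'+1, x, y, hxy, ?_⟩
          rw [hw, hBx, show a = 2*(m'+1) by omega]
          exact keyD m' b c x y hbc hbx hby hcx hcy hxy
      · refine ⟨2*m+1+1, x, y, hxy, ?_⟩
        rw [hw, hBx, show a = 2*m+1 by omega]
        exact keyB m b c x y hbc hbx hby hcx hcy hxy
    · exact ⟨a, b, c, hbc, by rw [hw, keyE a B hB b c hbc (by simp [hb, hc])]⟩
    · exact ⟨a, b, c, hbc, by rw [hw, keyE a B hB b c hbc (by simp [hb, hc])]⟩
    · -- none in B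
      have hBc : Bᶜ.card = 4 := by rw [Finset.card_compl, hB]; rfl
      obtain ⟨x, y, hbx, hby, hcx, hcy, hxy, hBx⟩ :=
        extract Bᶜ hBc b c hbc (by simpa using hb) (by simpa using hc)
      have hBeq' : B = ({b, c, x, y} : Finset (Fin 8))ᶜ := by
        rw [← hBx, compl_compl]
      rcases Nat.even_or_odd a with ⟨m, hm⟩ | ⟨m, hm⟩
      · refine ⟨2*m+1, x, y, hxy, ?_⟩
        rw [hw, hBeq', show a = 2*m by omega]
        exact keyA m b c x y hbc hbx hby hcx hcy hxy
      · refine ⟨2*m, x, y, hxy, ?_⟩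
        rw [hw, hBeq', show a = 2*m+1 by omega]
        exact keyC m b c x y hbc hbx hby hcx hcy hxy

lemma Cv_comm (a : ℕ) (b c : Fin 8) : Cv a b c = Cv a c b := by
  simp only [Cv, or_comm]

lemma line_move (b c k l : Fin 8) (hbc : b ≠ c) (hbk : b ≠ k) (hbl : b ≠ l)
    (hck : c ≠ k) (hcl : c ≠ l) (hkl : k ≠ l) : Step (Cv 0 b c) (Cv 0 k l) :=
  ⟨{b, c, k, l}, card4 b c k l hbc hbk hbl hck hcl hkl,
    Or.inl ⟨b, c, k, l, hbc, hkl, rfl, rfl, rfl⟩⟩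

lemma up_step (a : ℕ) (b c x y : Fin 8) (hbc : b ≠ c) (hbx : b ≠ x) (hby : b ≠ y)
    (hcx : c ≠ x) (hcy : c ≠ y) (hxy : x ≠ y) : Step (Cv a b c) (Cv (a+1) x y) := by
  rcases Nat.even_or_odd a with ⟨m, hm⟩ | ⟨m, hm⟩
  · refine ⟨({b, c, x, y} : Finset (Fin 8))ᶜ, ?_, Or.inr ⟨?_, ?_⟩⟩
    · rw [Finset.card_compl, card4 b c x y hbc hbx hby hcx hcy hxy]; rfl
    · intro hl
      obtain ⟨_, hbB, _⟩ := isLine_Cv hbc hl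
      simp at hbB
    · rw [show a = 2*m by omega, keyA m b c x y hbc hbx hby hcx hcy hxy]
  · refine ⟨{b, c, x, y}, card4 b c x y hbc hbx hby hcx hcy hxy, Or.inr ⟨?_, ?_⟩⟩
    · intro hl
      obtain ⟨ha, _, _⟩ := isLine_Cv hbc hl
      omega
    · rw [show a = 2*m+1 by omega, keyB m b c x y hbc hbx hby hcx hcy hxy]

lemma two_off (s : Finset (Fin 8)) (hs : s.card ≤ 4) :
    ∃ p q : Fin 8, p ≠ q ∧ p ∉ s ∧ q ∉ s := by
  have h : 1 < sᶜ.card := by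
    rw [Finset.card_compl]
    have : Fintype.card (Fin 8) = 8 := rfl
    omega
  obtain ⟨p, hp, q, hq, hpq⟩ := Finset.one_lt_card.mp h
  exact ⟨p, q, hpq, by simpa using hp, by simpa using hq⟩

lemma reach0 (b c : Fin 8) (hbc : b ≠ c) :
    Relation.ReflTransGen Step (Cv 0 0 1) (Cv 0 b c) := by
  obtain ⟨p, q, hpq, hp, hq⟩ := two_off {0, 1, b, c} (by
    apply le_trans (Finset.card_insert_le _ _)
    have := Finset.card_insert_le (1 : Fin 8) ({b, c} : Finset (Fin 8))
    have := Finset.card_insert_le b ({c} : Finset (Fin 8))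
    simp only [Finset.card_singleton] at *
    omega)
  simp only [Finset.mem_insert, Finset.mem_singleton, not_or] at hp hq
  obtain ⟨hp0, hp1, hpb, hpc⟩ := hp
  obtain ⟨hq0, hq1, hqb, hqc⟩ := hq
  exact Relation.ReflTransGen.head
    (line_move 0 1 p q (by decide) (Ne.symm hp0) (Ne.symm hq0) (Ne.symm hp1) (Ne.symm hq1) hpq)
    (Relation.ReflTransGen.single
      (line_move p q b c hpq hpb hpc hqb hqc hbc))

lemma reach_all (a : ℕ) (b c : Fin 8) (hbc : b ≠ c) :
    Relation.ReflTransGen Step (Cv 0 0 1) (Cv a b c) := by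
  induction a generalizing b c with
  | zero => exact reach0 b c hbc
  | succ n ih =>
    obtain ⟨p, q, hpq, hp, hq⟩ := two_off {b, c} (by
      have := Finset.card_insert_le b ({c} : Finset (Fin 8))
      simp only [Finset.card_singleton] at *
      omega)
    simp only [Finset.mem_insert, Finset.mem_singleton, not_or] at hp hq
    exact Relation.ReflTransGen.tail (ih p q hpq)
      (up_step n p q b c hpq hp.1 hp.2 hq.1 hq.2 hbc)

theorem reachable_from_line_iff_neg_one_curve (v : ℤ × (Fin 8 → ℤ)) :
    Relation.ReflTransGen Step (Cv 0 0 1) v ↔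
      ∃ (a : ℕ) (b c : Fin 8), b ≠ c ∧ v = Cv a b c := by
  constructor
  · intro h
    induction h with
    | refl => exact ⟨0, 0, 1, by decide, rfl⟩
    | tail _ hstep ih =>
      obtain ⟨a, b, c, hbc, rfl⟩ := ih
      exact step_preserve hbc hstep
  · rintro ⟨a, b, c, hbc, rfl⟩
    exact reach_all a b c hbc
end

section
/- The following identities hold for the Cremona curve moves applied to the vectors C_a^{b,c}. For a odd: Cr_{{1,2,3,4}}(C_a^{1,2}) = C_{a+1}^{3,4}, Cr_{{2,3,4,5}}(C_a^{1,2}) = C_a^{1,2}, and Cr_{{3,4,5,6}}(C_a^{1,2}) = C_{a−1}^{7,8}. For a even and a > 0: Cr_{{1,2,3,4}}(C_a^{1,2}) = C_{a−1}^{3,4}, Cr_{{2,3,4,5}}(C_a^{1,2}) = C_a^{1,2}, and Cr_{{3,4,5,6}}(C_a^{1,2}) = C_{a+1}^{7,8}. For a = 0: Cr_{{2,3,4,5}}(C_0^{1,2}) = C_0^{1,2} and Cr_{{3,4,5,6}}(C_0^{1,2}) = C_1^{7,8}. -/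
lemma hcA : (Finset.filter (fun x => x = 0 ∨ x = 1) ({0,1,2,3} : Finset (Fin 8))).card = 2 := by
  decide
lemma hcB : (Finset.filter (fun x => x = 0 ∨ x = 1) ({1,2,3,4} : Finset (Fin 8))).card = 1 := by
  decide
lemma hcC : (Finset.filter (fun x => x = 0 ∨ x = 1) ({2,3,4,5} : Finset (Fin 8))).card = 0 := by
  decide

set_option maxHeartbeats 1600000 in
/-- The points `P_1,…,P_8` are indexed by `0,…,7 : Fin 8`, so e.g.
`C_a^{1,2} = Cv a 0 1` and `{P_1,P_2,P_3,P_4}` is `{0,1,2,3}`. -/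
theorem cremona_moves_on_neg_one_curves (a : ℕ) :
    (Odd a →
      CrC ({0, 1, 2, 3} : Finset (Fin 8)) (Cv a 0 1) = Cv (a + 1) 2 3 ∧
      CrC ({1, 2, 3, 4} : Finset (Fin 8)) (Cv a 0 1) = Cv a 0 1 ∧
      CrC ({2, 3, 4, 5} : Finset (Fin 8)) (Cv a 0 1) = Cv (a - 1) 6 7) ∧
    (Even a → 0 < a →
      CrC ({0, 1, 2, 3} : Finset (Fin 8)) (Cv a 0 1) = Cv (a - 1) 2 3 ∧
      CrC ({1, 2, 3, 4} : Finset (Fin 8)) (Cv a 0 1) = Cv a 0 1 ∧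
      CrC ({2, 3, 4, 5} : Finset (Fin 8)) (Cv a 0 1) = Cv (a + 1) 6 7) ∧
    (CrC ({1, 2, 3, 4} : Finset (Fin 8)) (Cv 0 0 1) = Cv 0 0 1 ∧
      CrC ({2, 3, 4, 5} : Finset (Fin 8)) (Cv 0 0 1) = Cv 1 6 7) := by
  refine ⟨fun ho => ?_, fun he hp => ?_, ?_, ?_⟩
  · obtain ⟨k, rfl⟩ := ho
    have h1 : (2*k+1) % 2 = 1 := by omega
    have h2 : (2*k+1+1) % 2 = 0 := by omega
    have h3 : (2*k+1+1)/2 = k+1 := by omega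
    have h4 : 2*k+1-1 = 2*k := by omega
    have h5 : (2*k) % 2 = 0 := by omega
    have h6 : (2*k)/2 = k := by omega
    refine ⟨Prod.ext ?_ (funext fun i => ?_), Prod.ext ?_ (funext fun i => ?_),
      Prod.ext ?_ (funext fun i => ?_)⟩
    · simp [CrC, Cv, h1, h2, h3, hcA]; ring
    · fin_cases i <;> simp [CrC, Cv, h1, h2, h3, hcA] <;> ring
    · simp [CrC, Cv, h1, h3, hcB]; ring
    · fin_cases i <;> simp [CrC, Cv, h1, h3, hcB] <;> ring
    · simp [CrC, Cv, h1, h3, h4, h5, h6, hcC]; ring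
    · fin_cases i <;> simp [CrC, Cv, h1, h3, h4, h5, h6, hcC] <;> ring
  · obtain ⟨k, hk⟩ := he
    obtain ⟨m, rfl⟩ : ∃ m, a = 2*m+2 := ⟨k-1, by omega⟩
    have h1 : (2*m+2) % 2 = 0 := by omega
    have h2 : (2*m+2)/2 = m+1 := by omega
    have h3 : 2*m+2-1 = 2*m+1 := by omega
    have h4 : (2*m+1) % 2 = 1 := by omega
    have h5 : (2*m+1+1)/2 = m+1 := by omega
    have h6 : (2*m+2+1) % 2 = 1 := by omega
    have h7 : (2*m+2+1+1)/2 = m+2 := by omega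
    refine ⟨Prod.ext ?_ (funext fun i => ?_), Prod.ext ?_ (funext fun i => ?_),
      Prod.ext ?_ (funext fun i => ?_)⟩
    · simp [CrC, Cv, h1, h2, h3, h4, h5, hcA]; ring
    · fin_cases i <;> simp [CrC, Cv, h1, h2, h3, h4, h5, hcA] <;> ring
    · simp [CrC, Cv, h1, h2, hcB]; ring
    · fin_cases i <;> simp [CrC, Cv, h1, h2, hcB] <;> ring
    · simp [CrC, Cv, h1, h2, h6, h7, hcC]; ring
    · fin_cases i <;> simp [CrC, Cv, h1, h2, h6, h7, hcC] <;> ring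
  · have e0 : (0:ℕ) % 2 = 0 := rfl
    have e1 : (0:ℕ) / 2 = 0 := rfl
    refine Prod.ext ?_ (funext fun i => ?_)
    · simp [CrC, Cv, e0, e1, hcB]
    · fin_cases i <;> simp [CrC, Cv, e0, e1, hcB]
  · have e0 : (0:ℕ) % 2 = 0 := rfl
    have e1 : (0:ℕ) / 2 = 0 := rfl
    have e2 : (1:ℕ) % 2 = 1 := rfl
    have e3 : (1+1:ℕ) / 2 = 1 := rfl
    refine Prod.ext ?_ (funext fun i => ?_)
    · simp [CrC, Cv, e0, e1, e2, e3, hcC]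
    · fin_cases i <;> simp [CrC, Cv, e0, e1, e2, e3, hcC]
end

section
/- If (d; m_1,…,m_8) ∈ ℤ⁹ is in standard form and 4d − (m_1 + ⋯ + m_8) = 1, then there exists an integer m ≥ 1 such that d = 2m, m_1 = m_2 = ⋯ = m_7 = m and m_8 = m − 1. -/
theorem standard_form_anticanonical_one
    (d m1 m2 m3 m4 m5 m6 m7 m8 : ℤ)
    (h12 : m1 ≥ m2) (h23 : m2 ≥ m3) (h34 : m3 ≥ m4) (h45 : m4 ≥ m5)
    (h56 : m5 ≥ m6) (h67 : m6 ≥ m7) (h78 : m7 ≥ m8) (h8 : m8 ≥ 0)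
    (hstd : 2 * d ≥ m1 + m2 + m3 + m4)
    (hK : 4 * d - (m1 + m2 + m3 + m4 + m5 + m6 + m7 + m8) = 1) :
    ∃ m : ℤ, 1 ≤ m ∧ d = 2 * m ∧ m1 = m ∧ m2 = m ∧ m3 = m ∧ m4 = m ∧
      m5 = m ∧ m6 = m ∧ m7 = m ∧ m8 = m - 1 := by
  exact ⟨m4, by omega⟩
end

section
/- If (d; m_1,…,m_8) ∈ ℤ⁹ is in standard form, then for every integer a ≥ 1 and all distinct b, c ∈ {1,…,8}, the intersection pairing of (d; m_1,…,m_8) with C_a^{b,c} is nonnegative; explicitly, if a is even then (2a+1)d − (a/2)(m_1 + ⋯ + m_8) − m_b − m_c ≥ 0, and if a is odd then (2a+1)d − ((a+1)/2)(m_1 + ⋯ + m_8) + m_b + m_c ≥ 0. -/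
/-- `(d; m_1,…,m_8)` is in standard form. -/
def StdForm (d : ℤ) (m : Fin 8 → ℤ) : Prop :=
  (∀ i j : Fin 8, i ≤ j → m j ≤ m i) ∧ 0 ≤ m 7 ∧
    m 0 + m 1 + m 2 + m 3 ≤ 2 * d

lemma pair_ub (m : Fin 8 → ℤ) (mono : ∀ i j : Fin 8, i ≤ j → m j ≤ m i)
    (b c : Fin 8) (hbc : b ≠ c) : m b + m c ≤ m 0 + m 1 := by
  by_cases hb : b = 0
  · subst hb
    have hc : (1 : Fin 8) ≤ c := by
      rw [Fin.le_def]
      have : c.val ≠ 0 := fun hh => hbc (Fin.ext hh.symm)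
      omega
    have := mono 1 c hc
    linarith
  · have hb1 : (1 : Fin 8) ≤ b := by
      rw [Fin.le_def]
      have : b.val ≠ 0 := fun hh => hb (Fin.ext hh)
      omega
    have h1 := mono 1 b hb1
    have h2 := mono 0 c (Fin.zero_le c)
    linarith

lemma pair_lb (m : Fin 8 → ℤ) (mono : ∀ i j : Fin 8, i ≤ j → m j ≤ m i)
    (b c : Fin 8) (hbc : b ≠ c) : m 6 + m 7 ≤ m b + m c := by
  by_cases hb : b = 7
  · subst hb
    have hc : c ≤ (6 : Fin 8) := by
      rw [Fin.le_def]
      have h1 : c.val ≠ 7 := fun hh => hbc (Fin.ext hh).symm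
      have h2 := c.isLt
      omega
    have := mono c 6 hc
    linarith
  · have hb6 : b ≤ (6 : Fin 8) := by
      rw [Fin.le_def]
      have h1 : b.val ≠ 7 := fun hh => hb (Fin.ext hh)
      have h2 := b.isLt
      omega
    have h1 := mono b 6 hb6
    have h2 := mono c 7 (Fin.le_last c)
    linarith

lemma key_even (d : ℤ) (m : Fin 8 → ℤ) (h : StdForm d m) (k x y : ℤ)
    (hk : 1 ≤ k) (hxy : x + y ≤ m 0 + m 1) :
    0 ≤ (4 * k + 1) * d - k * (∑ i, m i) - x - y := by
  obtain ⟨mono, h7, hsum⟩ := h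
  have h01 := mono 0 1 (by decide)
  have h12 := mono 1 2 (by decide)
  have h23 := mono 2 3 (by decide)
  have h34 := mono 3 4 (by decide)
  have h45 := mono 4 5 (by decide)
  have h56 := mono 5 6 (by decide)
  have h67 := mono 6 7 (by decide)
  have hS : (∑ i, m i) = m 0 + m 1 + m 2 + m 3 + m 4 + m 5 + m 6 + m 7 := by
    simp [Fin.sum_univ_eight]
  rw [hS]
  have hd : 0 ≤ d := by linarith
  have h4d : m 0 + m 1 + m 2 + m 3 + m 4 + m 5 + m 6 + m 7 ≤ 4 * d := by linarith
  have hprod : 0 ≤ (k - 1) * (4 * d - (m 0 + m 1 + m 2 + m 3 + m 4 + m 5 + m 6 + m 7)) :=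
    mul_nonneg (by linarith) (by linarith)
  nlinarith [hprod]

lemma key_odd (d : ℤ) (m : Fin 8 → ℤ) (h : StdForm d m) (k x y : ℤ)
    (hk : 0 ≤ k) (hxy : m 6 + m 7 ≤ x + y) :
    0 ≤ (4 * k + 3) * d - (k + 1) * (∑ i, m i) + x + y := by
  obtain ⟨mono, h7, hsum⟩ := h
  have h01 := mono 0 1 (by decide)
  have h12 := mono 1 2 (by decide)
  have h23 := mono 2 3 (by decide)
  have h34 := mono 3 4 (by decide)
  have h45 := mono 4 5 (by decide)
  have h56 := mono 5 6 (by decide)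
  have h67 := mono 6 7 (by decide)
  have hS : (∑ i, m i) = m 0 + m 1 + m 2 + m 3 + m 4 + m 5 + m 6 + m 7 := by
    simp [Fin.sum_univ_eight]
  rw [hS]
  have hd : 0 ≤ d := by linarith
  have h4d : m 0 + m 1 + m 2 + m 3 + m 4 + m 5 + m 6 + m 7 ≤ 4 * d := by linarith
  have h45d : m 4 + m 5 ≤ d := by linarith
  have hprod : 0 ≤ k * (4 * d - (m 0 + m 1 + m 2 + m 3 + m 4 + m 5 + m 6 + m 7)) :=
    mul_nonneg hk (by linarith)
  nlinarith [hprod]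

theorem standard_meets_neg_one_curves_nonneg
    (d : ℤ) (m : Fin 8 → ℤ) (h : StdForm d m)
    (a : ℕ) (ha : 1 ≤ a) (b c : Fin 8) (hbc : b ≠ c) :
    (Even a →
      0 ≤ (2 * (a : ℤ) + 1) * d - ((a / 2 : ℕ) : ℤ) * (∑ i, m i) - m b - m c) ∧
    (Odd a →
      0 ≤ (2 * (a : ℤ) + 1) * d - (((a + 1) / 2 : ℕ) : ℤ) * (∑ i, m i) + m b + m c) := by
  have hub := pair_ub m h.1 b c hbc
  have hlb := pair_lb m h.1 b c hbc
  constructor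
  · intro he
    obtain ⟨k, hk⟩ := he
    have hk1 : 1 ≤ k := by omega
    have hdiv : (a / 2 : ℕ) = k := by omega
    have hcast : (a : ℤ) = 2 * (k : ℤ) := by rw [hk]; push_cast; ring
    rw [hdiv, hcast]
    have := key_even d m h (k : ℤ) (m b) (m c) (by exact_mod_cast hk1) hub
    linarith
  · intro ho
    obtain ⟨k, hk⟩ := ho
    have hdiv : ((a + 1) / 2 : ℕ) = k + 1 := by omega
    have hcast : (a : ℤ) = 2 * (k : ℤ) + 1 := by rw [hk]; push_cast; ring
    rw [hdiv, hcast]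
    have := key_odd d m h (k : ℤ) (m b) (m c) (by positivity) hlb
    push_cast
    linarith
end

section
/- In the free abelian group ℤ¹⁵ with basis H, E_1, …, E_8, E_{1,2}, …, E_{3,4}, with H', F_k (1 ≤ k ≤ 4) and F_{i,j} defined by H' = 3H − 2(E_1+E_2+E_3+E_4) − Σ_{1≤i<j≤4} E_{i,j}, F_k = H − Σ_{j∈{1,2,3,4}, j≠k} E_j − Σ_{1≤i<j≤4, k∉{i,j}} E_{i,j}, and F_{i,j} = E_{k,l} for {i,j,k,l} = {1,2,3,4}: for all integers d, m_1, …, m_8, setting t^{i,j} = m_i + m_j − d and s^{i,j} = −t^{k,l} for 1 ≤ i < j ≤ 4 with {i,j,k,l} = {1,2,3,4}, and s = 2d − m_1 − m_2 − m_3 − m_4, one has dH − Σ_{i=1}^8 m_iE_i − Σ_{1≤i<j≤4} max(t^{i,j}, 0)·E_{i,j} = (d+s)H' − Σ_{i=1}^4 (m_i + s)F_i − Σ_{i=5}^8 m_iE_i − Σ_{1≤i<j≤4} max(s^{i,j}, 0)·F_{i,j}. -/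
/-!  We model `ℤ¹⁵ = Fin 15 → ℤ` with standard basis indexed as follows:
index `0` is `H`, indices `1,…,8` are `E_1,…,E_8`, and indices `9,…,14` are
`E_{1,2}, E_{1,3}, E_{1,4}, E_{2,3}, E_{2,4}, E_{3,4}` (in that order). -/

/-- First member of the pair encoded by index `t ∈ {9,…,14}`. -/
def pf : ℕ → ℕ
  | 9 => 1 | 10 => 1 | 11 => 1 | 12 => 2 | 13 => 2 | 14 => 3 | _ => 0

/-- Second member of the pair encoded by index `t ∈ {9,…,14}`. -/
def ps : ℕ → ℕ
  | 9 => 2 | 10 => 3 | 11 => 4 | 12 => 3 | 13 => 4 | 14 => 4 | _ => 0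

/-- The basis vector `H`. -/
def Hb : Fin 15 → ℤ := Pi.single 0 1

/-- The basis vectors: `Eb i` for `i ∈ {1,…,8}` is `E_i`, and for
`i ∈ {9,…,14}` it is the `E_{i,j}` with pair index `i`. -/
def Eb (i : Fin 15) : Fin 15 → ℤ := Pi.single i 1

/-- `H' = 3H − 2(E_1+E_2+E_3+E_4) − Σ_{1≤i<j≤4} E_{i,j}`. -/
def H' : Fin 15 → ℤ := fun j =>
  if j.val = 0 then 3 else if j.val ≤ 4 then -2 else if 9 ≤ j.val then -1 else 0

/-- `F_k = H − Σ_{j∈{1,2,3,4}, j≠k} E_j − Σ_{k∉{i,j}} E_{i,j}` for `k ∈ {1,2,3,4}`. -/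
def F (k : ℕ) : Fin 15 → ℤ := fun j =>
  if j.val = 0 then 1
  else if j.val ≤ 4 then (if j.val = k then 0 else -1)
  else if 9 ≤ j.val then (if pf j.val = k ∨ ps j.val = k then 0 else -1)
  else 0

/-- `F_{i,j} = E_{k,l}` where `{i,j,k,l} = {1,2,3,4}`; for pair index `t`, the
complementary pair has index `23 − t`. -/
def Fp (t : ℕ) : Fin 15 → ℤ := fun j => if j.val + t = 23 then 1 else 0

set_option maxHeartbeats 2000000 in
/-- Here `t^{i,j} = m_i + m_j − d`, `s^{i,j} = −t^{k,l}` with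
`{i,j,k,l} = {1,2,3,4}` and `s = 2d − m_1 − m_2 − m_3 − m_4`. -/
theorem cremona_transform_with_base_locus
    (d m1 m2 m3 m4 m5 m6 m7 m8 s : ℤ)
    (hs : s = 2 * d - m1 - m2 - m3 - m4) :
    d • Hb - m1 • Eb 1 - m2 • Eb 2 - m3 • Eb 3 - m4 • Eb 4
      - m5 • Eb 5 - m6 • Eb 6 - m7 • Eb 7 - m8 • Eb 8
      - max (m1 + m2 - d) 0 • Eb 9 - max (m1 + m3 - d) 0 • Eb 10
      - max (m1 + m4 - d) 0 • Eb 11 - max (m2 + m3 - d) 0 • Eb 12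
      - max (m2 + m4 - d) 0 • Eb 13 - max (m3 + m4 - d) 0 • Eb 14
    = (d + s) • H' - (m1 + s) • F 1 - (m2 + s) • F 2 - (m3 + s) • F 3 - (m4 + s) • F 4
      - m5 • Eb 5 - m6 • Eb 6 - m7 • Eb 7 - m8 • Eb 8
      - max (-(m3 + m4 - d)) 0 • Fp 9 - max (-(m2 + m4 - d)) 0 • Fp 10
      - max (-(m2 + m3 - d)) 0 • Fp 11 - max (-(m1 + m4 - d)) 0 • Fp 12
      - max (-(m1 + m3 - d)) 0 • Fp 13 - max (-(m1 + m2 - d)) 0 • Fp 14 := by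
  subst hs
  funext j
  obtain ⟨v, hv⟩ := j
  simp only [Hb, Eb, H', F, Fp, Pi.sub_apply, Pi.smul_apply, smul_eq_mul,
    Pi.single_apply, Fin.mk.injEq, Fin.ext_iff]
  interval_cases v <;> simp [pf, ps] <;> omega
end
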